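/- Let n be a positive integer, B a symmetric positive-definite n×n real matrix, and g ∈ ℝⁿ with g ≠ 0. Define p(σ) = -(B + σI)⁻¹g for σ ≥ 0. Then σ ↦ 1/‖p(σ)‖₂ is differentiable on [0, ∞) with derivative at σ equal to p(σ)ᵀ(B + σI)⁻¹p(σ) / ‖p(σ)‖₂³. Equivalently, if p̂ denotes the solution of (B + σI)p̂ = -p(σ), the derivative equals -(p(σ)ᵀp̂)/‖p(σ)‖₂³, which is the quantity φ'(p) computed in the MSS method. -/

import Mathlib

/-!
Differentiating the inverse gives `d/dσ (B + σI)⁻¹ = -(B + σI)⁻²`, hence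
`p'(σ) = -(B + σI)⁻¹ p(σ)`. Away from zeros of `p`, `d/dσ ‖p‖⁻¹ = -⟪p, p'⟫ / ‖p‖³`, which is
`pᵀ(B + σI)⁻¹p / ‖p‖³`; and `p(σ) ≠ 0` because
`B + σI`, being positive definite for `σ ≥ 0`, is invertible and `g ≠ 0`.
-/

open Matrix

/-- `p(σ) = -(B + σI)⁻¹ g`, the solution of the shifted system `(B + σI)p = -g`. -/
noncomputable def psig {n : ℕ} (B : Matrix (Fin n) (Fin n) ℝ)
    (g : EuclideanSpace ℝ (Fin n)) (σ : ℝ) : EuclideanSpace ℝ (Fin n) :=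
  WithLp.toLp 2 (-((B + σ • 1)⁻¹.mulVec g))

open scoped RealInnerProductSpace

section MatrixCalculus

attribute [local instance] Matrix.linftyOpNormedAddCommGroup Matrix.linftyOpNormedSpace
  Matrix.linftyOpNormedRing Matrix.linftyOpNormedAlgebra

variable {𝕜 : Type*} [NontriviallyNormedField 𝕜] [CompleteSpace 𝕜]

theorem HasDerivAt.matrix_mulVec {m n : Type*} [Fintype m] [Fintype n]
    {M : 𝕜 → Matrix m n 𝕜} {M' : Matrix m n 𝕜} {x : 𝕜}
    (hM : HasDerivAt M M' x) (v : n → 𝕜) : HasDerivAt (fun t => M t *ᵥ v) (M' *ᵥ v) x :=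
  let L : Matrix m n 𝕜 →L[𝕜] m → 𝕜 := LinearMap.toContinuousLinearMap ((mulVecBilin 𝕜 𝕜).flip v)
  L.hasFDerivAt.comp_hasDerivAt x hM

theorem Matrix.hasDerivAt_inv_add_smul_one {n : Type*} [Fintype n] [DecidableEq n]
    {B : Matrix n n 𝕜} {σ : 𝕜} (hA : IsUnit (B + σ • 1)) :
    HasDerivAt (fun t : 𝕜 => (B + t • 1)⁻¹) (-((B + σ • 1)⁻¹ * (B + σ • 1)⁻¹)) σ := by
  -- completeness for the uniform structure of the operator norm, which instance search
  -- does not identify with the product uniform structure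
  have : @CompleteSpace (Matrix n n 𝕜) PseudoMetricSpace.toUniformSpace :=
    FiniteDimensional.complete 𝕜 _
  have hpath : HasDerivAt (fun t : 𝕜 => B + t • (1 : Matrix n n 𝕜)) 1 σ :=
    (((hasDerivAt_id' σ).smul_const (1 : Matrix n n 𝕜)).const_add B).congr_deriv (one_smul _ _)
  have hinv := hasFDerivAt_ringInverse (𝕜 := 𝕜) hA.unit
  rw [← Ring.inverse_unit, hA.unit_spec] at hinv
  simp only [nonsing_inv_eq_ringInverse]
  refine (hinv.comp_hasDerivAt σ hpath).congr_deriv ?_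
  simp

end MatrixCalculus

theorem HasDerivAt.inv_norm {F : Type*} [NormedAddCommGroup F] [InnerProductSpace ℝ F]
    {f : ℝ → F} {f' : F} {x : ℝ} (hf : HasDerivAt f f' x) (h0 : f x ≠ 0) :
    HasDerivAt (fun t => ‖f t‖⁻¹) (-⟪f x, f'⟫ / ‖f x‖ ^ 3) x := by
  have hpos : 0 < ‖f x‖ := norm_pos_iff.2 h0
  have hnorm : HasDerivAt (fun t => ‖f t‖) (⟪f x, f'⟫ / ‖f x‖) x := by
    have h := hf.norm_sq.sqrt (by positivity)
    simp only [Real.sqrt_sq (norm_nonneg _)] at h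
    rwa [← mul_div_mul_left _ _ two_ne_zero]
  refine (hnorm.inv hpos.ne').congr_deriv ?_
  field_simp

section Shifted

variable {n : ℕ} {B : Matrix (Fin n) (Fin n) ℝ} {σ : ℝ}

theorem hasDerivAt_psig (g : EuclideanSpace ℝ (Fin n)) (hA : IsUnit (B + σ • 1)) :
    HasDerivAt (psig B g) (WithLp.toLp 2 (-((B + σ • 1)⁻¹ *ᵥ psig B g σ))) σ := by
  have h := ((hasDerivAt_inv_add_smul_one hA).matrix_mulVec g).neg
  refine ((PiLp.hasFDerivAt_toLp (𝕜 := ℝ) 2 _).comp_hasDerivAt σ h).congr_deriv ?_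
  simp [psig, neg_mulVec, mulVec_neg, mulVec_mulVec]

theorem psig_ne_zero {g : EuclideanSpace ℝ (Fin n)} (hA : IsUnit (B + σ • 1)) (hg : g ≠ 0) :
    psig B g σ ≠ 0 := by
  intro h
  have hinv : (B + σ • 1)⁻¹ *ᵥ g = (B + σ • 1)⁻¹ *ᵥ 0 := by
    simpa [psig] using congrArg WithLp.ofLp h
  exact hg (WithLp.ofLp_injective 2 (mulVec_injective_of_isUnit (isUnit_nonsing_inv_iff.2 hA) hinv))

end Shifted

theorem mss_stmt8 (n : ℕ)
    (B : Matrix (Fin n) (Fin n) ℝ) (hB : B.PosDef)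
    (g : EuclideanSpace ℝ (Fin n)) (hg : g ≠ 0)
    (σ : ℝ) (hσ : 0 ≤ σ) :
    HasDerivAt (fun t : ℝ => 1 / ‖psig B g t‖)
      ((psig B g σ ⬝ᵥ (B + σ • 1)⁻¹.mulVec (psig B g σ)) / ‖psig B g σ‖ ^ 3) σ ∧
    ∀ phat : Fin n → ℝ, (B + σ • 1).mulVec phat = -(psig B g σ) →
      (psig B g σ ⬝ᵥ (B + σ • 1)⁻¹.mulVec (psig B g σ)) / ‖psig B g σ‖ ^ 3 =
        -(psig B g σ ⬝ᵥ phat) / ‖psig B g σ‖ ^ 3 := by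
  have hA : IsUnit (B + σ • 1) := (hB.add_posSemidef (PosSemidef.one.smul hσ)).isUnit
  refine ⟨?_, fun phat hphat => ?_⟩
  · simp only [one_div]
    convert (hasDerivAt_psig g hA).inv_norm (psig_ne_zero hA hg) using 1
    simp [EuclideanSpace.inner_eq_star_dotProduct, dotProduct_comm]
  · have hsolve : (B + σ • 1)⁻¹ *ᵥ psig B g σ = -phat := by
      have := hA.invertible
      rw [← inv_mulVec_eq_vec hphat.symm, mulVec_neg, neg_neg]
    rw [hsolve, dotProduct_neg]
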